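/- Let K ⊆ ℝ² be a closed connected set satisfying limsup_{r→0} H¹(K ∩ B(x₀,r))/(2r) = 1/2 at x₀ ∈ K. Then K is locally chord-arc at x₀: there exist C > 0 and r₀ > 0 such that for every r ≤ r₀ and every pair of points y, z ∈ K ∩ ∂B(x₀,r), the geodesic (length-minimizing) curve inside K joining y to z has length at most C·r. One can take C = 4 and r₀ such that H¹(K ∩ B(x₀,r)) ≤ (11/10)·r for all r ≤ 3r₀. -/

import Mathlib

open MeasureTheory Metric Set Filter
open scoped ENNReal Topology

/-! The density hypothesis gives `H¹(K ∩ B(x₀, ρ)) ≤ 1.1 ρ` for small `ρ`. Fix `y, z` on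
`∂B(x₀, r)` and let `S = K ∩ B̄(x₀, 5r/2)`. Unless `K ⊆ S`, boundary bumping makes every component
of `S` through `∂B(x₀, r)` reach `∂B(x₀, 5r/2)`; projecting radially, such a component has
`H¹ ≥ 3r/2`. Two disjoint ones would need `H¹(S) ≥ 3r > 1.1 · 13r/5`, so `y` and `z` lie in one
component of `S`, a continuum in `K` of length at most `2.86 r ≤ 4r`. -/

section Topology

variable {X : Type*} [TopologicalSpace X]

theorem IsClosed.connectedComponentIn {S : Set X} (hS : IsClosed S) (x : X) :
    IsClosed (connectedComponentIn S x) := by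
  refine closure_subset_iff_isClosed.mp ?_
  by_cases hx : x ∈ S
  · exact isPreconnected_connectedComponentIn.closure.subset_connectedComponentIn
      (subset_closure (mem_connectedComponentIn hx))
      (closure_minimal (connectedComponentIn_subset S x) hS)
  · simp [connectedComponentIn_eq_empty hx]

theorem disjoint_connectedComponentIn_of_notMem {S : Set X} {y z : X}
    (h : z ∉ connectedComponentIn S y) :
    Disjoint (connectedComponentIn S y) (connectedComponentIn S z) := by
  refine Set.disjoint_left.mpr fun p hpy hpz => h ?_
  rw [connectedComponentIn_eq hpy, ← connectedComponentIn_eq hpz]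
  exact mem_connectedComponentIn (connectedComponentIn_nonempty_iff.mp ⟨p, hpz⟩)

-- In a compact Hausdorff space, components and quasi-components agree.
theorem exists_isClopen_mem_disjoint_of_disjoint_connectedComponent [T2Space X] [CompactSpace X]
    {x : X} {T : Set X} (hT : IsClosed T) (h : Disjoint (connectedComponent x) T) :
    ∃ U, IsClopen U ∧ x ∈ U ∧ Disjoint U T := by
  rw [connectedComponent_eq_iInter_isClopen, disjoint_iff_inter_eq_empty, inter_comm] at h
  obtain ⟨t, ht⟩ := hT.isCompact.elim_finite_subfamily_closed _
    (fun s : { s : Set X // IsClopen s ∧ x ∈ s } => s.2.1.isClosed) h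
  refine ⟨⋂ i ∈ t, i, isClopen_biInter_finset fun i _ => i.2.1,
    mem_iInter₂.mpr fun i _ => i.2.2, ?_⟩
  rw [disjoint_iff_inter_eq_empty, inter_comm, ht]

-- The boundary bumping theorem of continuum theory.
theorem connectedComponentIn_inter_frontier_nonempty [T2Space X] {K F : Set X}
    (hK : IsClosed K) (hKc : IsPreconnected K) (hF : IsCompact F) (hKF : ¬K ⊆ F) {y : X}
    (hy : y ∈ K ∩ F) : (connectedComponentIn (K ∩ F) y ∩ frontier F).Nonempty := by
  set S := K ∩ F
  have : CompactSpace S := isCompact_iff_compactSpace.mp (hF.inter_left hK)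
  by_contra hdisj
  obtain ⟨W, hW, hyW, hWT⟩ := exists_isClopen_mem_disjoint_of_disjoint_connectedComponent
    (x := (⟨y, hy⟩ : S)) (isClosed_frontier.preimage continuous_subtype_val) (by
      rw [Set.disjoint_iff_inter_eq_empty, ← Set.not_nonempty_iff_eq_empty]
      rintro ⟨p, hpc, hpT⟩
      exact hdisj ⟨p, connectedComponentIn_eq_image hy ▸ mem_image_of_mem _ hpc, hpT⟩)
  obtain ⟨V, hV, hVW⟩ := isOpen_induced_iff.mp hW.isOpen
  have hWint : Subtype.val '' W ⊆ interior F := by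
    rintro _ ⟨q, hqW, rfl⟩
    rw [← self_sdiff_frontier]
    exact ⟨q.2.2, fun hq => disjoint_left.mp hWT hqW hq⟩
  have hWeq : K ∩ (V ∩ interior F) = Subtype.val '' W := by
    refine Subset.antisymm (fun p ⟨hpK, hpV, hpF⟩ => ?_) fun p hp => ⟨?_, ?_, hWint hp⟩
    · exact ⟨⟨p, hpK, interior_subset hpF⟩, hVW ▸ hpV, rfl⟩
    · obtain ⟨q, -, rfl⟩ := hp
      exact q.2.1
    · obtain ⟨q, hqW, rfl⟩ := hp
      exact (hVW ▸ hqW : q ∈ Subtype.val ⁻¹' V)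
  have hWclosed : IsClosed (Subtype.val '' W) :=
    (hW.isClosed.isCompact.image continuous_subtype_val).isClosed
  obtain ⟨z, hzK, hzF⟩ := not_subset.mp hKF
  obtain ⟨p, hpK, hpu, hpv⟩ := hKc _ _ (hV.inter isOpen_interior) hWclosed.isOpen_compl
    (fun p _ => (em _).imp_right fun h h' => h (hWeq.superset h').2)
    ⟨y, hWeq.superset (mem_image_of_mem _ hyW)⟩
    ⟨z, hzK, fun hz => hzF (interior_subset (hWint hz))⟩
  exact hpv (hWeq.subset ⟨hpK, hpu⟩)

end Topology

section Metric

variable {X : Type*} [MetricSpace X] [MeasurableSpace X] [BorelSpace X]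

theorem IsPreconnected.ofReal_dist_sub_dist_le_hausdorffMeasure {s : Set X}
    (hs : IsPreconnected s) {a b : X} (ha : a ∈ s) (hb : b ∈ s) (x₀ : X) :
    ENNReal.ofReal (dist b x₀ - dist a x₀) ≤ μH[1] s := by
  have hlip : LipschitzWith 1 (dist · x₀) := LipschitzWith.dist_left x₀
  have hIcc : Icc (dist a x₀) (dist b x₀) ⊆ (dist · x₀) '' s :=
    (hs.image _ hlip.continuous.continuousOn).Icc_subset (mem_image_of_mem _ ha)
      (mem_image_of_mem _ hb)
  calc ENNReal.ofReal (dist b x₀ - dist a x₀)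
      = μH[1] (Icc (dist a x₀) (dist b x₀)) := by rw [hausdorffMeasure_real, Real.volume_Icc]
    _ ≤ μH[1] ((dist · x₀) '' s) := measure_mono hIcc
    _ ≤ μH[1] s := by simpa using hlip.hausdorffMeasure_image_le zero_le_one s

variable [ProperSpace X] {K : Set X} {x₀ : X} {ρ R : ℝ}

theorem ofReal_sub_dist_le_hausdorffMeasure_connectedComponentIn (hK : IsClosed K)
    (hKc : IsPreconnected K) (hKR : ¬K ⊆ closedBall x₀ R) {w : X}
    (hw : w ∈ K ∩ closedBall x₀ R) :
    ENNReal.ofReal (R - dist w x₀) ≤ μH[1] (connectedComponentIn (K ∩ closedBall x₀ R) w) := by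
  obtain ⟨p, hpC, hpR⟩ := connectedComponentIn_inter_frontier_nonempty hK hKc
    (isCompact_closedBall x₀ R) hKR hw
  have hpR : dist p x₀ = R := frontier_closedBall_subset_sphere hpR
  exact hpR ▸ isPreconnected_connectedComponentIn.ofReal_dist_sub_dist_le_hausdorffMeasure
    (mem_connectedComponentIn hw) hpC x₀

theorem mem_connectedComponentIn_of_hausdorffMeasure_lt (hK : IsClosed K)
    (hKc : IsPreconnected K) {y z : X} (hy : y ∈ K ∩ closedBall x₀ ρ)
    (hz : z ∈ K ∩ closedBall x₀ ρ)
    (hKR : μH[1] (K ∩ closedBall x₀ R) < ENNReal.ofReal (2 * (R - ρ))) :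
    z ∈ connectedComponentIn (K ∩ closedBall x₀ R) y := by
  by_cases hKsub : K ⊆ closedBall x₀ R
  · rw [inter_eq_left.mpr hKsub, hKc.connectedComponentIn hy.1]
    exact hz.1
  have hρR : ρ < R := by
    linarith [ENNReal.ofReal_pos.mp (pos_of_gt hKR)]
  have hyR : y ∈ K ∩ closedBall x₀ R := ⟨hy.1, closedBall_subset_closedBall hρR.le hy.2⟩
  have hzR : z ∈ K ∩ closedBall x₀ R := ⟨hz.1, closedBall_subset_closedBall hρR.le hz.2⟩
  by_contra hyz
  refine hKR.not_ge ?_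
  calc ENNReal.ofReal (2 * (R - ρ))
      ≤ ENNReal.ofReal ((R - dist y x₀) + (R - dist z x₀)) :=
        ENNReal.ofReal_le_ofReal (by linarith [mem_closedBall.mp hy.2, mem_closedBall.mp hz.2])
    _ ≤ μH[1] (connectedComponentIn (K ∩ closedBall x₀ R) y) +
        μH[1] (connectedComponentIn (K ∩ closedBall x₀ R) z) :=
        ENNReal.ofReal_add_le.trans (add_le_add
          (ofReal_sub_dist_le_hausdorffMeasure_connectedComponentIn hK hKc hKsub hyR)
          (ofReal_sub_dist_le_hausdorffMeasure_connectedComponentIn hK hKc hKsub hzR))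
    _ = μH[1] (connectedComponentIn (K ∩ closedBall x₀ R) y ∪
          connectedComponentIn (K ∩ closedBall x₀ R) z) :=
        (measure_union (disjoint_connectedComponentIn_of_notMem hyz)
          ((hK.inter isClosed_closedBall).connectedComponentIn z).measurableSet).symm
    _ ≤ μH[1] (K ∩ closedBall x₀ R) :=
        measure_mono (union_subset (connectedComponentIn_subset _ _)
          (connectedComponentIn_subset _ _))

end Metric

theorem exists_pos_forall_le_of_limsup_div_lt {f : ℝ → ℝ≥0∞} {a c : ℝ}
    (h : limsup (fun r => f r / ENNReal.ofReal (a * r)) (𝓝[>] 0) < ENNReal.ofReal c)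
    (ha : 0 < a) : ∃ δ > 0, ∀ r, 0 < r → r < δ → f r ≤ ENNReal.ofReal (c * a * r) := by
  obtain ⟨δ, hδ, hball⟩ := Metric.eventually_nhds_iff.mp
    (eventually_nhdsWithin_iff.mp (eventually_lt_of_limsup_lt h))
  refine ⟨δ, hδ, fun r hr hrδ => ?_⟩
  have hlt := hball (by rwa [Real.dist_eq, sub_zero, abs_of_pos hr]) hr
  rw [ENNReal.div_lt_iff (Or.inl (ENNReal.ofReal_pos.mpr (by positivity)).ne')
      (Or.inl ENNReal.ofReal_ne_top),
    ← ENNReal.ofReal_mul' (by positivity), ← mul_assoc] at hlt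
  exact hlt.le

theorem stmt4_general
    (K : Set (EuclideanSpace ℝ (Fin 2))) (x₀ : EuclideanSpace ℝ (Fin 2))
    (hK : IsClosed K) (hKconn : IsConnected K)
    (hdens : Filter.limsup
      (fun r : ℝ => μH[1] (K ∩ Metric.ball x₀ r) / ENNReal.ofReal (2 * r))
      (𝓝[>] (0:ℝ)) = 1/2) :
    ∃ r₀ > (0:ℝ),
      (∀ r : ℝ, 0 < r → r ≤ 3 * r₀ →
        μH[1] (K ∩ Metric.ball x₀ r) ≤ ENNReal.ofReal ((11/10) * r)) ∧
      (∀ r : ℝ, 0 < r → r ≤ r₀ →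
        ∀ y ∈ K ∩ Metric.sphere x₀ r, ∀ z ∈ K ∩ Metric.sphere x₀ r,
          ∃ Γ : Set (EuclideanSpace ℝ (Fin 2)),
            IsCompact Γ ∧ IsConnected Γ ∧ Γ ⊆ K ∧ y ∈ Γ ∧ z ∈ Γ ∧
            μH[1] Γ ≤ ENNReal.ofReal (4 * r)) := by
  obtain ⟨δ, hδ, hbound⟩ := exists_pos_forall_le_of_limsup_div_lt (c := 11 / 20)
    (by
      rw [hdens, ← ENNReal.ofReal_one, ← ENNReal.ofReal_ofNat 2,
        ← ENNReal.ofReal_div_of_pos two_pos, ENNReal.ofReal_lt_ofReal_iff (by norm_num)]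
      norm_num) two_pos
  have hball : ∀ r, 0 < r → r < δ → μH[1] (K ∩ ball x₀ r) ≤ ENNReal.ofReal (11 / 10 * r) :=
    fun r hr hrδ => (hbound r hr hrδ).trans_eq (by ring_nf)
  refine ⟨δ / 4, by positivity, fun r hr hr₀ => hball r hr (by linarith),
    fun r hr hr₀ y hy z hz => ?_⟩
  set S := K ∩ closedBall x₀ (5 / 2 * r)
  have hS : μH[1] S ≤ ENNReal.ofReal (11 / 10 * (13 / 5 * r)) :=
    (measure_mono (inter_subset_inter_right K (closedBall_subset_ball (by linarith)))).trans
      (hball _ (by positivity) (by linarith))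
  have hyS : y ∈ S :=
    ⟨hy.1, closedBall_subset_closedBall (by linarith) (sphere_subset_closedBall hy.2)⟩
  refine ⟨connectedComponentIn S y,
    ((isCompact_closedBall x₀ _).inter_left hK).of_isClosed_subset
      ((hK.inter isClosed_closedBall).connectedComponentIn y) (connectedComponentIn_subset _ _),
    isConnected_connectedComponentIn_iff.mpr hyS,
    (connectedComponentIn_subset _ _).trans inter_subset_left, mem_connectedComponentIn hyS,
    mem_connectedComponentIn_of_hausdorffMeasure_lt hK hKconn.isPreconnected
      ⟨hy.1, sphere_subset_closedBall hy.2⟩ ⟨hz.1, sphere_subset_closedBall hz.2⟩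
      (hS.trans_lt ((ENNReal.ofReal_lt_ofReal_iff (by linarith)).mpr (by linarith))),
    (measure_mono (connectedComponentIn_subset _ _)).trans
      (hS.trans (ENNReal.ofReal_le_ofReal (by linarith)))⟩

/-- A closed connected set `K ⊆ ℝ²` of Hausdorff 1-density 1/2 at `x₀ ∈ K` is locally
chord-arc at `x₀`: there is `r₀ > 0` such that `H¹(K ∩ B(x₀,r)) ≤ (11/10) r` for
`r ≤ 3r₀`, and for every `0 < r ≤ r₀` and `y, z ∈ K ∩ ∂B(x₀,r)` there is a compact
connected curve `Γ ⊆ K` joining `y` and `z` with `H¹(Γ) ≤ 4r` (so in particular the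
geodesic in `K` from `y` to `z` has length at most `C r` with `C = 4`). -/
theorem stmt4
    (K : Set (EuclideanSpace ℝ (Fin 2))) (x₀ : EuclideanSpace ℝ (Fin 2))
    (hK : IsClosed K) (hKconn : IsConnected K) (hx₀ : x₀ ∈ K)
    (hdens : Filter.limsup
      (fun r : ℝ => μH[1] (K ∩ Metric.ball x₀ r) / ENNReal.ofReal (2 * r))
      (𝓝[>] (0:ℝ)) = 1/2) :
    ∃ r₀ > (0:ℝ),
      (∀ r : ℝ, 0 < r → r ≤ 3 * r₀ →
        μH[1] (K ∩ Metric.ball x₀ r) ≤ ENNReal.ofReal ((11/10) * r)) ∧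
      (∀ r : ℝ, 0 < r → r ≤ r₀ →
        ∀ y ∈ K ∩ Metric.sphere x₀ r, ∀ z ∈ K ∩ Metric.sphere x₀ r,
          ∃ Γ : Set (EuclideanSpace ℝ (Fin 2)),
            IsCompact Γ ∧ IsConnected Γ ∧ Γ ⊆ K ∧ y ∈ Γ ∧ z ∈ Γ ∧
            μH[1] Γ ≤ ENNReal.ofReal (4 * r)) :=
  stmt4_general K x₀ hK hKconn hdens
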